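/- arXiv:1703.08739 — 2 statements merged into one kernel-verified Lean document; each statement's English description precedes it below -/
import Mathlib

section
/- In an out-regular degree-d k-geodetic digraph of order M(d,k)+ε, every vertex v' with in-degree greater than d satisfies d+1 ≤ d^-(v') ≤ d+ε. -/
/-!
The in-neighbours of `v` are either reachable from `v` within distance `k` or outliers of `v`.
By out-regularity there are `M(d,k)` walks of length at most `k` from `v`, and by geodecity they
end at distinct vertices, so `|O(v)| ≤ ε`. A reachable in-neighbour `u` is sent to the second
vertex `c` of the walk from `v` to `u`; appending the arc `u → v` gives the unique short walk
from `c` to `v`, so `u` is recovered from `c`, and there are at most `d` such `u`.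
-/

/-- Moore bound `M(d,k) = 1 + d + ... + d^k`. -/
def moore (d k : ℕ) : ℕ := ∑ i ∈ Finset.range (k + 1), d ^ i

/-- Moore bound with integer argument, with the convention `M(d,k) = 0` for `k < 0`. -/
def mooreZ (d : ℕ) (j : ℤ) : ℕ := if j < 0 then 0 else moore d j.toNat

/-- Walks of length at most `k` from `u` to `v` in the digraph with arc relation `A`,
encoded as vertex lists (so a walk of length `≤ k` is a list of length `≤ k+1`). -/
def walksUpTo {V : Type*} (A : V → V → Prop) (k : ℕ) (u v : V) : Set (List V) :=
  {l | l.Chain' A ∧ l.head? = some u ∧ l.getLast? = some v ∧ l.length ≤ k + 1}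

/-- A digraph is `k`-geodetic if between any ordered pair of vertices there is at most
one directed walk of length at most `k`. -/
def IsGeodetic {V : Type*} (A : V → V → Prop) (k : ℕ) : Prop :=
  ∀ u v : V, (walksUpTo A k u v).Subsingleton

/-- `v` is reachable from `u` by a directed walk of length at most `k`. -/
def reachIn {V : Type*} (A : V → V → Prop) (k : ℕ) (u v : V) : Prop :=
  (walksUpTo A k u v).Nonempty

/-- Out-degree of a vertex. -/
noncomputable def outDeg {V : Type*} (A : V → V → Prop) (u : V) : ℕ := {v | A u v}.ncard

/-- In-degree of a vertex. -/
noncomputable def inDeg {V : Type*} (A : V → V → Prop) (v : V) : ℕ := {u | A u v}.ncard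

/-- The outlier set `O(u)`: vertices not reachable from `u` within distance `k`. -/
def outlier {V : Type*} (A : V → V → Prop) (k : ℕ) (u : V) : Set V :=
  {v | ¬ reachIn A k u v}

section

variable {V : Type*} {A : V → V → Prop} {k d : ℕ} {u v w : V}

def walksFrom (A : V → V → Prop) (k : ℕ) (u : V) : Set (List V) :=
  {l | l.IsChain A ∧ l.head? = some u ∧ l.length ≤ k + 1}

lemma walksFrom_finite [Finite V] (A : V → V → Prop) (k : ℕ) (u : V) :
    (walksFrom A k u).Finite :=
  (List.finite_length_le V (k + 1)).subset fun _ hl => hl.2.2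

lemma walksFrom_zero (A : V → V → Prop) (u : V) : walksFrom A 0 u = {[u]} := by
  ext (_ | ⟨a, _ | ⟨b, l⟩⟩) <;> simp [walksFrom, eq_comm]

lemma walksFrom_succ (A : V → V → Prop) (k : ℕ) (u : V) :
    walksFrom A (k + 1) u = insert [u] (⋃ c ∈ {c | A u c}, List.cons u '' walksFrom A k c) := by
  ext (_ | ⟨a, _ | ⟨b, l⟩⟩) <;> simp [walksFrom, List.isChain_cons_cons, eq_comm]
  grind

lemma moore_succ (d k : ℕ) : moore d (k + 1) = 1 + d * moore d k := by
  simp only [moore, Finset.sum_range_succ' _ (k + 1), Finset.mul_sum, pow_succ']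
  ring

lemma ncard_walksFrom [Finite V] (hout : ∀ u, outDeg A u = d) (k : ℕ) (u : V) :
    (walksFrom A k u).ncard = moore d k := by
  induction k generalizing u with
  | zero => simp [walksFrom_zero, moore]
  | succ k ih =>
    have hdisj : {c | A u c}.PairwiseDisjoint fun c => List.cons u '' walksFrom A k c := by
      rintro c - c' - hne
      refine Set.disjoint_left.mpr ?_
      rintro _ ⟨l, hl, rfl⟩ ⟨l', hl', hll'⟩
      cases List.cons_injective hll'
      exact hne (Option.some_injective _ (hl.2.1.symm.trans hl'.2.1))
    have hnotMem : [u] ∉ ⋃ c ∈ {c | A u c}, List.cons u '' walksFrom A k c := by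
      simp only [Set.mem_iUnion, Set.mem_image, List.cons.injEq, not_exists]
      rintro c - _ ⟨⟨-, h, -⟩, -, rfl⟩
      simp at h
    rw [walksFrom_succ, Set.ncard_insert_of_notMem hnotMem
      ((Set.toFinite _).biUnion fun c _ => (walksFrom_finite A k c).image _),
      (Set.toFinite _).ncard_biUnion (fun c _ => (walksFrom_finite A k c).image _) hdisj,
      finsum_mem_congr rfl fun c _ => by
        rw [Set.ncard_image_of_injective _ List.cons_injective, ih],
      finsum_mem_eq_finite_toFinset_sum _ (Set.toFinite _), Finset.sum_const, smul_eq_mul,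
      ← Set.ncard_eq_toFinset_card _, ← outDeg, hout, moore_succ]
    ring

lemma mem_walksUpTo_getLast {l : List V} (hl : l ∈ walksFrom A k u) :
    l ∈ walksUpTo A k u (l.getLast?.getD u) := by
  obtain ⟨hc, hh, hlen⟩ := hl
  cases l with
  | nil => simp at hh
  | cons a t => exact ⟨hc, hh, by simp [List.getLast?_eq_some_getLast], hlen⟩

lemma concat_mem_walksUpTo {l : List V} (hl : l ∈ walksUpTo A k u v) (h : A v w) :
    l ++ [w] ∈ walksUpTo A (k + 1) u w := by
  obtain ⟨hc, hh, hlast, hlen⟩ := hl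
  refine ⟨List.isChain_append.mpr ⟨hc, List.isChain_singleton w, ?_⟩,
    by simp [List.head?_append, hh], List.getLast?_concat, by simpa using hlen⟩
  simp_all

lemma reachIn.exists_adj_of_ne (h : reachIn A (k + 1) u w) (hne : u ≠ w) :
    ∃ c, A u c ∧ reachIn A k c w := by
  obtain ⟨l, hc, hh, hlast, hlen⟩ := h
  match l, hh with
  | [_], hh => simp_all
  | a :: c :: t, hh =>
    obtain rfl : a = u := by simpa using hh
    obtain ⟨hac, hc⟩ := List.isChain_cons_cons.mp hc
    exact ⟨c, hac, c :: t, hc, rfl, by simpa using hlast, by simpa using hlen⟩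

namespace IsGeodetic

lemma not_adj_self (hgeo : IsGeodetic A (k + 1)) (u : V) : ¬ A u u := fun h => by
  simpa using hgeo u u (show [u] ∈ walksUpTo A (k + 1) u u from
    ⟨List.isChain_singleton u, rfl, rfl, by simp⟩) ⟨List.isChain_pair.mpr h, rfl, rfl, by simp⟩

lemma moore_le_ncard_reachIn [Finite V] (hgeo : IsGeodetic A k) (hout : ∀ u, outDeg A u = d)
    (u : V) : moore d k ≤ {v | reachIn A k u v}.ncard := by
  rw [← ncard_walksFrom hout k u]
  refine Set.ncard_le_ncard_of_injOn (fun l => l.getLast?.getD u)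
    (fun l hl => ⟨l, mem_walksUpTo_getLast hl⟩) (fun l hl l' hl' heq => ?_) (Set.toFinite _)
  dsimp only at heq
  exact hgeo u _ (mem_walksUpTo_getLast hl) (heq ▸ mem_walksUpTo_getLast hl')

lemma ncard_outlier_le [Fintype V] {ε : ℕ} (hgeo : IsGeodetic A k)
    (hout : ∀ u, outDeg A u = d) (hcard : Fintype.card V = moore d k + ε) (u : V) :
    (outlier A k u).ncard ≤ ε := by
  have hsum := Set.ncard_add_ncard_compl {v | reachIn A k u v}
  rw [Nat.card_eq_fintype_card, hcard] at hsum
  have := hgeo.moore_le_ncard_reachIn hout u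
  change {v | reachIn A k u v}ᶜ.ncard ≤ ε
  omega

lemma ncard_inNbrs_reachIn_le_outDeg [Finite V] (hgeo : IsGeodetic A k) (v : V) :
    {u | A u v ∧ reachIn A k v u}.ncard ≤ outDeg A v := by
  cases k with
  | zero =>
    refine Set.ncard_le_ncard (fun u ⟨huv, l, _, hh, hlast, hlen⟩ => ?_) (Set.toFinite _)
    match l, hlen with
    | [a], _ =>
      obtain rfl : a = v := by simpa using hh
      obtain rfl : a = u := by simpa using hlast
      exact huv
  | succ k =>
    have hstep : ∀ u ∈ {u | A u v ∧ reachIn A (k + 1) v u}, ∃ c, A v c ∧ reachIn A k c u :=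
      fun u ⟨huv, hr⟩ => hr.exists_adj_of_ne fun h => hgeo.not_adj_self u (h ▸ huv)
    choose! f hfadj hfreach using hstep
    refine Set.ncard_le_ncard_of_injOn f hfadj (fun u hu u' hu' heq => ?_) (Set.toFinite _)
    obtain ⟨l, hl⟩ := hfreach u hu
    obtain ⟨l', hl'⟩ := hfreach u' hu'
    rw [heq] at hl
    obtain rfl : l = l' := List.append_cancel_right
      (hgeo _ _ (concat_mem_walksUpTo hl hu.1) (concat_mem_walksUpTo hl' hu'.1))
    exact Option.some_injective _ (hl.2.2.1.symm.trans hl'.2.2.1)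

end IsGeodetic

end

/-- In an out-regular degree-`d` `k`-geodetic digraph of order `M(d,k)+ε`,
every vertex `v'` with in-degree greater than `d` satisfies `d+1 ≤ d⁻(v') ≤ d+ε`. -/
theorem stmt6 {V : Type*} [Fintype V] (A : V → V → Prop) (d k ε : ℕ)
    (hgeo : IsGeodetic A k) (hout : ∀ u : V, outDeg A u = d)
    (hcard : Fintype.card V = moore d k + ε) :
    ∀ v' : V, d < inDeg A v' → d + 1 ≤ inDeg A v' ∧ inDeg A v' ≤ d + ε := by
  intro v hlt
  refine ⟨hlt, ?_⟩
  have hsplit : {u | A u v} ⊆ {u | A u v ∧ reachIn A k v u} ∪ outlier A k v :=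
    fun u hu => (em (reachIn A k v u)).imp (⟨hu, ·⟩) id
  calc inDeg A v ≤ ({u | A u v ∧ reachIn A k v u} ∪ outlier A k v).ncard :=
        Set.ncard_le_ncard hsplit (Set.toFinite _)
    _ ≤ {u | A u v ∧ reachIn A k v u}.ncard + (outlier A k v).ncard := Set.ncard_union_le _ _
    _ ≤ d + ε := add_le_add (hout v ▸ hgeo.ncard_inNbrs_reachIn_le_outDeg v)
        (hgeo.ncard_outlier_le hout hcard v)
end

section
/- Let G be a k-geodetic digraph (k ≥ 3) with out-degree 2, order M(2,k)+2, and in-degree sequence (1,1,2,...,2,3,3). Then each of the two vertices of in-degree 3 has both vertices of in-degree 1 among its in-neighbours. -/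
/-! Suppose `v'` has in-degree 3 and the in-degree-1 vertex `v` is not an in-neighbour of `v'`.
Let `T n = inBall A n v'` be the set of vertices with a walk of length at most `n` to `v'`.
For `n < k`, `k`-geodecity makes `v'` and the in-neighbourhoods of the vertices of `T n`
pairwise disjoint subsets of `T (n+1)`, so
`|T (n+1)| ≥ 1 + 2|T n| + #(in-degree 3 in T n) - #(in-degree 1 in T n)`.
As `v' ∈ T n` has in-degree 3 and only two vertices have in-degree 1, `|T n|` at least doubles
at each step; since `v ∉ T 1`, moreover `|T 1| ≥ 4` and `|T 2| ≥ 9`. Hence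
`|T k| ≥ 9 · 2^(k-2) > 2^(k+1) + 1 = |V|` for `k ≥ 3`. -/

open Finset

section Walks

variable {V : Type*} {A : V → V → Prop}

theorem singleton_mem_walksUpTo (k : ℕ) (v : V) : [v] ∈ walksUpTo A k v v :=
  ⟨List.isChain_singleton v, rfl, rfl, by simp⟩

theorem walksUpTo_mono {m n : ℕ} (hmn : m ≤ n) {u v : V} :
    walksUpTo A m u v ⊆ walksUpTo A n u v :=
  fun _ ⟨hc, hu, hv, hl⟩ => ⟨hc, hu, hv, by omega⟩

theorem cons_mem_walksUpTo {n : ℕ} {w u v : V} {l : List V} (hwu : A w u)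
    (hl : l ∈ walksUpTo A n u v) : w :: l ∈ walksUpTo A (n + 1) w v := by
  obtain ⟨hc, hu, hv, hlen⟩ := hl
  obtain ⟨t, rfl⟩ : ∃ t, l = u :: t := by
    cases l with
    | nil => simp at hu
    | cons a t => exact ⟨t, by simp_all⟩
  exact ⟨List.isChain_cons_cons.mpr ⟨hwu, hc⟩, rfl, by simpa using hv, by simpa using hlen⟩

theorem eq_or_adj_of_reachIn_one {u v : V} (h : reachIn A 1 u v) : u = v ∨ A u v := by
  obtain ⟨l, hc, hu, hv, hlen⟩ := h
  match l, hlen with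
  | [a], _ => simp_all
  | [a, b], _ =>
    simp only [List.head?_cons, List.getLast?_cons_cons, List.getLast?_singleton,
      Option.some.injEq] at hu hv
    exact .inr (hu ▸ hv ▸ List.isChain_pair.mp hc)

theorem IsGeodetic.eq_of_adj_of_adj {k n : ℕ} (hgeo : IsGeodetic A k) (hn : n < k)
    {u u' v w : V} (hu : reachIn A n u v) (hu' : reachIn A n u' v) (hwu : A w u)
    (hwu' : A w u') : u = u' := by
  obtain ⟨l, hl⟩ := hu
  obtain ⟨l', hl'⟩ := hu'
  have hll' : w :: l = w :: l' :=
    hgeo w v (walksUpTo_mono hn (cons_mem_walksUpTo hwu hl))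
      (walksUpTo_mono hn (cons_mem_walksUpTo hwu' hl'))
  simpa [hl.2.1, hl'.2.1] using congrArg List.head? (List.cons.inj hll').2

theorem IsGeodetic.not_adj_of_reachIn {k n : ℕ} (hgeo : IsGeodetic A k) (hn : n < k)
    {u v : V} (hu : reachIn A n u v) : ¬ A v u := by
  intro hvu
  obtain ⟨l, hl⟩ := hu
  have hcycle : v :: l = [v] :=
    hgeo v v (walksUpTo_mono hn (cons_mem_walksUpTo hvu hl)) (singleton_mem_walksUpTo k v)
  obtain rfl : l = [] := (List.cons.inj hcycle).2
  exact absurd hl.2.1 (by simp)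

end Walks

theorem sum_add_card_filter_eq_one {ι : Type*} (s : Finset ι) (f : ι → ℕ)
    (hf : ∀ i ∈ s, f i = 1 ∨ f i = 2 ∨ f i = 3) :
    ∑ i ∈ s, f i + #(s.filter (f · = 1)) = 2 * #s + #(s.filter (f · = 3)) := by
  rw [card_filter, card_filter, ← sum_add_distrib, card_eq_sum_ones, mul_sum, ← sum_add_distrib]
  exact sum_congr rfl fun i hi => by rcases hf i hi with h | h | h <;> simp [h]

section InBall

variable {V : Type*} [Fintype V] {A : V → V → Prop}

open scoped Classical in
noncomputable def inBall (A : V → V → Prop) (n : ℕ) (v : V) : Finset V :=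
  univ.filter (reachIn A n · v)

@[simp]
theorem mem_inBall {n : ℕ} {u v : V} : u ∈ inBall A n v ↔ reachIn A n u v := by
  simp [inBall]

theorem self_mem_inBall (n : ℕ) (v : V) : v ∈ inBall A n v :=
  mem_inBall.mpr ⟨[v], singleton_mem_walksUpTo n v⟩

theorem inDeg_eq_card_filter [DecidableRel A] (u : V) : inDeg A u = #(univ.filter (A · u)) := by
  rw [inDeg, ← Set.ncard_coe_finset, coe_filter_univ]

theorem IsGeodetic.one_add_sum_inDeg_le_card_inBall {k n : ℕ} (hgeo : IsGeodetic A k)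
    (hn : n < k) (v : V) :
    1 + ∑ u ∈ inBall A n v, inDeg A u ≤ #(inBall A (n + 1) v) := by
  classical
  set P := (inBall A n v).biUnion fun u => univ.filter (A · u)
  have hdisj : (inBall A n v : Set V).PairwiseDisjoint fun u => univ.filter (A · u) := by
    intro u hu u' hu' hne
    refine disjoint_left.mpr fun w hwu hwu' => hne ?_
    simp only [mem_filter, mem_univ, true_and, mem_coe, mem_inBall] at hu hu' hwu hwu'
    exact hgeo.eq_of_adj_of_adj hn hu hu' hwu hwu'
  have hvP : v ∉ P := by
    simp only [P, mem_biUnion, mem_filter, mem_univ, true_and, mem_inBall, not_exists, not_and]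
    exact fun u hu => hgeo.not_adj_of_reachIn hn hu
  have hPsub : insert v P ⊆ inBall A (n + 1) v := by
    refine insert_subset (self_mem_inBall _ v) fun w hw => ?_
    simp only [P, mem_biUnion, mem_filter, mem_univ, true_and, mem_inBall] at hw ⊢
    obtain ⟨u, ⟨l, hl⟩, hwu⟩ := hw
    exact ⟨w :: l, cons_mem_walksUpTo hwu hl⟩
  calc 1 + ∑ u ∈ inBall A n v, inDeg A u = #(insert v P) := by
        rw [card_insert_of_notMem hvP, card_biUnion hdisj, add_comm]
        simp only [inDeg_eq_card_filter]
    _ ≤ #(inBall A (n + 1) v) := card_le_card hPsub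

theorem IsGeodetic.two_mul_card_inBall_add_le {k n : ℕ}
    (hgeo : IsGeodetic A k) (hall : ∀ u, inDeg A u = 1 ∨ inDeg A u = 2 ∨ inDeg A u = 3)
    (hn : n < k) (v : V) :
    1 + 2 * #(inBall A n v) + #((inBall A n v).filter (inDeg A · = 3)) ≤
      #(inBall A (n + 1) v) + #((inBall A n v).filter (inDeg A · = 1)) := by
  have hsum := sum_add_card_filter_eq_one (inBall A n v) (inDeg A) fun u _ => hall u
  have hball := hgeo.one_add_sum_inDeg_le_card_inBall hn v
  omega

theorem IsGeodetic.inDeg_add_one_le_card_inBall_one {k : ℕ} (hgeo : IsGeodetic A k)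
    (hk : 0 < k) (v : V) : inDeg A v + 1 ≤ #(inBall A 1 v) := by
  have hball : _ ≤ #(inBall A 1 v) := hgeo.one_add_sum_inDeg_le_card_inBall hk v
  have hv := single_le_sum (fun u _ => Nat.zero_le (inDeg A u)) (self_mem_inBall (A := A) 0 v)
  omega

end InBall

theorem card_filter_le_ncard {α : Type*} [Finite α] (s : Finset α) (p : α → Prop)
    [DecidablePred p] : #(s.filter p) ≤ {x | p x}.ncard := by
  rw [← Set.ncard_coe_finset]
  exact Set.ncard_le_ncard fun x hx => (mem_filter.mp hx).2

theorem card_filter_add_one_le_ncard {α : Type*} [Finite α] {s : Finset α} {p : α → Prop}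
    [DecidablePred p] {a : α} (ha : p a) (has : a ∉ s) :
    #(s.filter p) + 1 ≤ {x | p x}.ncard := by
  rw [← Set.ncard_coe_finset, ← Set.ncard_insert_of_notMem (a := a) (by simp [has])]
  exact Set.ncard_le_ncard (Set.insert_subset ha fun x hx => (mem_filter.mp hx).2)

theorem two_pow_sub_mul_le_of_two_mul_le {f : ℕ → ℕ} {a b : ℕ} (hab : a ≤ b)
    (h : ∀ n, a ≤ n → n < b → 2 * f n ≤ f (n + 1)) : 2 ^ (b - a) * f a ≤ f b := by
  induction b, hab using Nat.le_induction with
  | base => simp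
  | succ b hab ih =>
    calc 2 ^ (b + 1 - a) * f a = 2 * (2 ^ (b - a) * f a) := by
          rw [Nat.sub_add_comm hab, pow_succ]; ring
      _ ≤ 2 * f b := by gcongr; exact ih fun n hn hnb => h n hn (by omega)
      _ ≤ f (b + 1) := h b hab (by omega)

theorem moore_two_add_one (k : ℕ) : moore 2 k + 1 = 2 ^ (k + 1) := by
  rw [moore, Nat.geomSum_eq le_rfl]
  have := Nat.one_le_two_pow (n := k + 1)
  omega

theorem stmt13_general {V : Type*} [Fintype V] (A : V → V → Prop) (k : ℕ) (hk : 3 ≤ k)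
    (hgeo : IsGeodetic A k)
    (hcard : Fintype.card V = moore 2 k + 2)
    (h1 : {v : V | inDeg A v = 1}.ncard = 2)
    (hall : ∀ v : V, inDeg A v = 1 ∨ inDeg A v = 2 ∨ inDeg A v = 3) :
    ∀ v' : V, inDeg A v' = 3 → ∀ v : V, inDeg A v = 1 → A v v' := by
  intro v' hv' v hv
  by_contra hvv'
  have hthrees (n : ℕ) : 1 ≤ #((inBall A n v').filter (inDeg A · = 3)) :=
    card_pos.mpr ⟨v', mem_filter.mpr ⟨self_mem_inBall n v', hv'⟩⟩
  have hones (n : ℕ) : #((inBall A n v').filter (inDeg A · = 1)) ≤ 2 :=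
    h1 ▸ card_filter_le_ncard _ _
  have hv_ball : v ∉ inBall A 1 v' := fun h => by
    rcases eq_or_adj_of_reachIn_one (mem_inBall.mp h) with rfl | hadj
    · omega
    · exact hvv' hadj
  have hball_one : 4 ≤ #(inBall A 1 v') := by
    have := hgeo.inDeg_add_one_le_card_inBall_one (by omega) v'
    omega
  have hball_two : 9 ≤ #(inBall A 2 v') := by
    have : _ ≤ #(inBall A 2 v') + _ := hgeo.two_mul_card_inBall_add_le hall (by omega : 1 < k) v'
    have := card_filter_add_one_le_ncard (p := (inDeg A · = 1)) hv hv_ball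
    have := hthrees 1
    omega
  have hball_k : 2 ^ (k - 2) * 9 ≤ #(inBall A k v') := by
    refine (Nat.mul_le_mul_left _ hball_two).trans
      (two_pow_sub_mul_le_of_two_mul_le (f := fun n => #(inBall A n v')) (by omega)
        fun n _ hn => ?_)
    have := hgeo.two_mul_card_inBall_add_le hall hn v'
    have := hones n
    have := hthrees n
    omega
  have hpow : 2 ^ (k + 1) = 2 ^ (k - 2) * 8 := by
    rw [show k + 1 = k - 2 + 3 by omega, pow_add]
    rfl
  have := card_le_univ (inBall A k v')
  have := moore_two_add_one k
  have := Nat.one_lt_two_pow (n := k - 2) (by omega)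
  omega

/-- Let `G` be a `k`-geodetic digraph (`k ≥ 3`) with out-degree 2, order
`M(2,k)+2`, and in-degree sequence `(1,1,2,…,2,3,3)`.  Then each of the two vertices of
in-degree 3 has both vertices of in-degree 1 among its in-neighbours. -/
theorem stmt13 {V : Type*} [Fintype V] (A : V → V → Prop) (k : ℕ) (hk : 3 ≤ k)
    (hgeo : IsGeodetic A k) (hout : ∀ u : V, outDeg A u = 2)
    (hcard : Fintype.card V = moore 2 k + 2)
    (h1 : {v : V | inDeg A v = 1}.ncard = 2)
    (h3 : {v : V | inDeg A v = 3}.ncard = 2)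
    (hall : ∀ v : V, inDeg A v = 1 ∨ inDeg A v = 2 ∨ inDeg A v = 3) :
    ∀ v' : V, inDeg A v' = 3 → ∀ v : V, inDeg A v = 1 → A v v' :=
  stmt13_general A k hk hgeo hcard h1 hall
end
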